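/- arXiv:2106.04642 — 4 statements merged into one kernel-verified Lean document; each statement's English description precedes it below -/
import Mathlib

section
/- Let A be a matrix in SU(1,1;ℍ) with row vectors (a,b) and (c,d), and let q be a quaternion with |q| < 1. Then c·q + d ≠ 0 and |(a·q + b)·(c·q + d)⁻¹| < 1; that is, the linear fractional transformation A·q = (aq+b)(cq+d)⁻¹ is defined on the open unit ball B⁴ = {q ∈ ℍ : |q| < 1} and maps B⁴ into B⁴. -/
open Matrix Quaternion

noncomputable section

/-- The matrix `J = diag(1, -1)` in `M₂(ℍ)`. -/
def Jq : Matrix (Fin 2) (Fin 2) (Quaternion ℝ) := !![1, 0; 0, -1]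

/-- `SU(1,1;ℍ) = {A ∈ M₂(ℍ) : A*JA = J}`. -/
def SU11H : Set (Matrix (Fin 2) (Fin 2) (Quaternion ℝ)) := {A | Aᴴ * Jq * A = Jq}

/-! The Möbius map of `A ∈ SU(1,1;ℍ)` comes from the action of `A` on `(q, 1)`, which preserves the
hermitian form `|x|² - |y|²` of `J`. Hence `|aq + b|² - |cq + d|² = |q|² - 1 < 0`, so `cq + d ≠ 0` and
`|(aq + b)(cq + d)⁻¹| = |aq + b| / |cq + d| < 1`. -/

theorem Matrix.star_mulVec_dotProduct_mulVec_of_conjTranspose_mul_mul_eq {R n : Type*}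
    [Ring R] [StarRing R] [Fintype n] {A J : Matrix n n R} (hA : Aᴴ * J * A = J) (v : n → R) :
    star (A *ᵥ v) ⬝ᵥ J *ᵥ A *ᵥ v = star v ⬝ᵥ J *ᵥ v := by
  rw [star_mulVec, ← dotProduct_mulVec, mulVec_mulVec, mulVec_mulVec, hA]

theorem star_dotProduct_Jq_mulVec (w : Fin 2 → Quaternion ℝ) :
    star w ⬝ᵥ Jq *ᵥ w = ((‖w 0‖ ^ 2 - ‖w 1‖ ^ 2 : ℝ) : Quaternion ℝ) := by
  have h : star w ⬝ᵥ Jq *ᵥ w = star (w 0) * w 0 - star (w 1) * w 1 := by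
    simp [Jq, dotProduct, mulVec, Fin.sum_univ_two, sub_eq_add_neg]
  rw [h, star_mul_self, star_mul_self, normSq_eq_norm_mul_self, normSq_eq_norm_mul_self]
  push_cast [sq]
  rfl

theorem norm_sq_sub_norm_sq_of_mem_SU11H {A : Matrix (Fin 2) (Fin 2) (Quaternion ℝ)} (hA : A ∈ SU11H)
    (x y : Quaternion ℝ) :
    ‖A 0 0 * x + A 0 1 * y‖ ^ 2 - ‖A 1 0 * x + A 1 1 * y‖ ^ 2 = ‖x‖ ^ 2 - ‖y‖ ^ 2 := by
  have h := Matrix.star_mulVec_dotProduct_mulVec_of_conjTranspose_mul_mul_eq hA ![x, y]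
  rw [star_dotProduct_Jq_mulVec, star_dotProduct_Jq_mulVec] at h
  simpa [mulVec, dotProduct, Fin.sum_univ_two] using coe_injective h

theorem norm_mul_inv_lt_one_of_norm_lt {K : Type*} [NormedDivisionRing K] {x y : K}
    (h : ‖x‖ < ‖y‖) : ‖x * y⁻¹‖ < 1 := by
  have hy : 0 < ‖y‖ := (norm_nonneg x).trans_lt h
  rwa [norm_mul, norm_inv, mul_inv_lt_iff₀ hy, one_mul]

theorem stmt4 (A : Matrix (Fin 2) (Fin 2) (Quaternion ℝ)) (hA : A ∈ SU11H)
    (a b c d : Quaternion ℝ)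
    (ha : a = A 0 0) (hb : b = A 0 1) (hc : c = A 1 0) (hd : d = A 1 1)
    (q : Quaternion ℝ) (hq : ‖q‖ < 1) :
    c * q + d ≠ 0 ∧ ‖(a * q + b) * (c * q + d)⁻¹‖ < 1 := by
  have hform := norm_sq_sub_norm_sq_of_mem_SU11H hA q 1
  rw [← ha, ← hb, ← hc, ← hd, mul_one, mul_one, norm_one, one_pow] at hform
  have hlt : ‖a * q + b‖ < ‖c * q + d‖ := by
    have : ‖q‖ ^ 2 < 1 := pow_lt_one₀ (norm_nonneg q) hq two_ne_zero
    exact (pow_lt_pow_iff_left₀ (norm_nonneg _) (norm_nonneg _) two_ne_zero).mp (by linarith)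
  exact ⟨norm_pos_iff.mp ((norm_nonneg _).trans_lt hlt), norm_mul_inv_lt_one_of_norm_lt hlt⟩
end
end

section
/- Let g be a matrix in SU(1,1;ℍ) with row vectors (a,b) and (c,d), let p and q be quaternions with |p| = |q| = 1, and let Φ = g·diag(p,q)·g⁻¹ ∈ M₂(ℍ). Then Re(Φ₁₁) − Re(Φ₂₂) = (|a|² + |b|²)·(Re(p) − Re(q)). -/
open Matrix Quaternion

noncomputable section

/-!
Expanding `Φ = g · diag(p, q) · J g* J` gives `Φ₁₁ = a p ā - b q b̄` and `Φ₂₂ = d q d̄ - c p c̄`,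
and `Re (x y x̄) = |x|² Re y`, so `Re Φ₁₁ - Re Φ₂₂ = (|a|² + |c|²) Re p - (|b|² + |d|²) Re q`.
The entries of `g*Jg = J` say `|a|² - |c|² = 1`, `|b|² - |d|² = -1` and `āb = c̄d`; taking norms in
the last one, `|a|²|b|² = |c|²|d|² = (|a|² - 1)(|b|² + 1)`, whence `|c| = |b|` and `|d| = |a|`.
-/

namespace Quaternion

lemma re_mul_mul_star (x y : ℍ[ℝ]) : (x * y * star x).re = ‖x‖ ^ 2 * y.re := by
  rw [sq, ← normSq_eq_norm_mul_self, normSq_def']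
  simp only [re_mul, re_star, imI_mul, imI_star, mul_neg, sub_neg_eq_add, imJ_mul, imJ_star,
    imK_mul, imK_star]
  ring

lemma re_star_mul_self (x : ℍ[ℝ]) : (star x * x).re = ‖x‖ ^ 2 := by
  rw [star_mul_self, re_coe, normSq_eq_norm_mul_self, sq]

end Quaternion

lemma Jq_mul_conjTranspose_mul_Jq (g : Matrix (Fin 2) (Fin 2) ℍ[ℝ]) :
    Jq * gᴴ * Jq = !![star (g 0 0), -star (g 1 0); -star (g 0 1), star (g 1 1)] := by
  ext i j : 1
  fin_cases i <;> fin_cases j <;> simp [Jq, mul_apply, Fin.sum_univ_two, vecMul, dotProduct]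

lemma re_sub_re_conj_diagonal (g : Matrix (Fin 2) (Fin 2) ℍ[ℝ]) (p q : ℍ[ℝ]) :
    ((g * diagonal ![p, q] * (Jq * gᴴ * Jq)) 0 0).re
        - ((g * diagonal ![p, q] * (Jq * gᴴ * Jq)) 1 1).re
      = (‖g 0 0‖ ^ 2 + ‖g 1 0‖ ^ 2) * p.re - (‖g 0 1‖ ^ 2 + ‖g 1 1‖ ^ 2) * q.re := by
  have h00 : (g * diagonal ![p, q] * (Jq * gᴴ * Jq)) 0 0
      = g 0 0 * p * star (g 0 0) - g 0 1 * q * star (g 0 1) := by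
    simp [Jq_mul_conjTranspose_mul_Jq, mul_apply, Fin.sum_univ_two, sub_eq_add_neg]
  have h11 : (g * diagonal ![p, q] * (Jq * gᴴ * Jq)) 1 1
      = g 1 1 * q * star (g 1 1) - g 1 0 * p * star (g 1 0) := by
    simp [Jq_mul_conjTranspose_mul_Jq, mul_apply, Fin.sum_univ_two, sub_eq_add_neg, add_comm]
  rw [h00, h11]
  simp only [re_sub, re_mul_mul_star]
  ring

namespace SU11H

variable {g : Matrix (Fin 2) (Fin 2) ℍ[ℝ]}

lemma star_mul_entries (hg : g ∈ SU11H) :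
    star (g 0 0) * g 0 0 - star (g 1 0) * g 1 0 = 1 ∧
      star (g 0 0) * g 0 1 = star (g 1 0) * g 1 1 ∧
      star (g 0 1) * g 0 1 - star (g 1 1) * g 1 1 = -1 := by
  have hentry (i j : Fin 2) : (gᴴ * Jq * g) i j = Jq i j := by rw [hg]
  refine ⟨?_, ?_, ?_⟩
  · simpa [Jq, mul_apply, Fin.sum_univ_two, sub_eq_add_neg] using hentry 0 0
  · simpa [Jq, mul_apply, Fin.sum_univ_two, add_neg_eq_zero] using hentry 0 1
  · simpa [Jq, mul_apply, Fin.sum_univ_two, sub_eq_add_neg] using hentry 1 1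

lemma sq_norm_sub_sq_norm_col_zero (hg : g ∈ SU11H) : ‖g 0 0‖ ^ 2 - ‖g 1 0‖ ^ 2 = 1 := by
  simpa only [re_sub, re_star_mul_self, re_one] using
    congrArg QuaternionAlgebra.re (star_mul_entries hg).1

lemma sq_norm_sub_sq_norm_col_one (hg : g ∈ SU11H) : ‖g 0 1‖ ^ 2 - ‖g 1 1‖ ^ 2 = -1 := by
  simpa only [re_sub, re_star_mul_self, re_neg, re_one] using
    congrArg QuaternionAlgebra.re (star_mul_entries hg).2.2

lemma norm_mul_norm_row_eq (hg : g ∈ SU11H) : ‖g 0 0‖ * ‖g 0 1‖ = ‖g 1 0‖ * ‖g 1 1‖ := by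
  simpa only [norm_mul, norm_star] using congrArg norm (star_mul_entries hg).2.1

lemma norm_one_zero_eq_norm_zero_one (hg : g ∈ SU11H) : ‖g 1 0‖ = ‖g 0 1‖ := by
  have hcol₀ := sq_norm_sub_sq_norm_col_zero hg
  have hcol₁ := sq_norm_sub_sq_norm_col_one hg
  have hprod : ‖g 0 0‖ ^ 2 * ‖g 0 1‖ ^ 2 = ‖g 1 0‖ ^ 2 * ‖g 1 1‖ ^ 2 := by
    rw [← mul_pow, ← mul_pow, norm_mul_norm_row_eq hg]
  refine (pow_left_inj₀ (norm_nonneg _) (norm_nonneg _) two_ne_zero).1 ?_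
  linear_combination -hprod + ‖g 0 1‖ ^ 2 * hcol₀ + ‖g 1 0‖ ^ 2 * hcol₁

lemma norm_one_one_eq_norm_zero_zero (hg : g ∈ SU11H) : ‖g 1 1‖ = ‖g 0 0‖ := by
  refine (pow_left_inj₀ (norm_nonneg _) (norm_nonneg _) two_ne_zero).1 ?_
  linear_combination -sq_norm_sub_sq_norm_col_zero hg - sq_norm_sub_sq_norm_col_one hg
    - congrArg (· ^ 2) (norm_one_zero_eq_norm_zero_one hg)

end SU11H

theorem stmt7_general (g : Matrix (Fin 2) (Fin 2) (Quaternion ℝ)) (hg : g ∈ SU11H)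
    (a b : Quaternion ℝ)
    (ha : a = g 0 0) (hb : b = g 0 1)
    (p q : Quaternion ℝ)
    (Φ : Matrix (Fin 2) (Fin 2) (Quaternion ℝ))
    (hΦ : Φ = g * Matrix.diagonal ![p, q] * (Jq * gᴴ * Jq)) :
    (Φ 0 0).re - (Φ 1 1).re = (‖a‖ ^ 2 + ‖b‖ ^ 2) * (p.re - q.re) := by
  subst ha hb hΦ
  rw [re_sub_re_conj_diagonal, SU11H.norm_one_zero_eq_norm_zero_one hg,
    SU11H.norm_one_one_eq_norm_zero_zero hg]
  ring

theorem stmt7 (g : Matrix (Fin 2) (Fin 2) (Quaternion ℝ)) (hg : g ∈ SU11H)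
    (a b c d : Quaternion ℝ)
    (ha : a = g 0 0) (hb : b = g 0 1) (hc : c = g 1 0) (hd : d = g 1 1)
    (p q : Quaternion ℝ) (hp : ‖p‖ = 1) (hq : ‖q‖ = 1)
    (Φ : Matrix (Fin 2) (Fin 2) (Quaternion ℝ))
    (hΦ : Φ = g * Matrix.diagonal ![p, q] * (Jq * gᴴ * Jq)) :
    (Φ 0 0).re - (Φ 1 1).re = (‖a‖ ^ 2 + ‖b‖ ^ 2) * (p.re - q.re) :=
  stmt7_general g hg a b ha hb p q Φ hΦ

end
end

section
/- Let τ = (1+√5)/2 and κ = √(1+3τ), and let σ̂ ∈ M₂(ℍ) be the matrix σ̂ = (√(τ−1)/2)·[[(1+τ)κ·i + κ·j − τκ·k, τ − (1+3τ)·i + (1+2τ)·k], [τ + (1+3τ)·i − (1+2τ)·k, −(1+τ)κ·i + κ·j + τκ·k]]. Then σ̂ ∈ SU(1,1;ℍ) and σ̂² = −I; in particular σ̂ has order 4 in SU(1,1;ℍ). -/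
open Matrix Quaternion

noncomputable section

/-- The golden ratio τ = (1+√5)/2. -/
def tau : ℝ := (1 + Real.sqrt 5) / 2

/-- κ = √(1+3τ). -/
def kap : ℝ := Real.sqrt (1 + 3 * tau)

/-- The lift σ̂ of the inside-out involution σ, as a 2×2 quaternionic matrix. -/
def sigmaHat : Matrix (Fin 2) (Fin 2) (Quaternion ℝ) :=
  (Real.sqrt (tau - 1) / 2) •
    !![⟨0, (1 + tau) * kap, kap, -(tau * kap)⟩, ⟨tau, -(1 + 3 * tau), 0, 1 + 2 * tau⟩;
       ⟨tau, 1 + 3 * tau, 0, -(1 + 2 * tau)⟩, ⟨0, -((1 + tau) * kap), kap, tau * kap⟩]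

/-!
Write `σ̂ = s • M` with `s = √(τ - 1) / 2` and `M = !![a, b; b̄, d]`, where `a` and `d` are purely
imaginary quaternions of the same norm and `a b + b d = 0`. For every such block matrix,
`Mᴴ J M = r • J` and `M² = -r • 1` with `r = |a|² - |b|²`. Here `r = 4τ`, and
`s² · 4τ = τ (τ - 1) = 1` because `τ² = τ + 1`.
-/

lemma Matrix.conjTranspose_fin_two {α : Type*} [Star α] (a b c d : α) :
    (!![a, b; c, d])ᴴ = !![star a, star c; star b, star d] := by
  ext i j; fin_cases i <;> fin_cases j <;> rfl

lemma Matrix.conjTranspose_smul_quaternion {m n R : Type*} [CommRing R] (c : R)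
    (M : Matrix m n ℍ[R]) : (c • M)ᴴ = c • Mᴴ :=
  Matrix.ext fun _ _ => Quaternion.star_smul c _

lemma orderOf_eq_four_of_sq_eq_neg_one {R : Type*} [Ring R] {x : R} (hx : x ^ 2 = -1)
    (h : (-1 : R) ≠ 1) : orderOf x = 4 := by
  have : Fact (Nat.Prime 2) := ⟨Nat.prime_two⟩
  refine orderOf_eq_prime_pow (p := 2) (n := 1) ?_ ?_
  · rwa [pow_one, hx]
  · rw [show 2 ^ (1 + 1) = 2 * 2 by rfl, pow_mul, hx, neg_one_sq]

namespace Quaternion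

variable {R : Type*} [CommRing R] {a b d : ℍ[R]}

lemma mul_self_of_star_eq_neg (ha : star a = -a) : a * a = -((normSq a : R) : ℍ[R]) := by
  rw [← self_mul_star, ha, mul_neg, neg_neg]

lemma star_mul_add_mul_star_eq_zero (ha : star a = -a) (hd : star d = -d)
    (hab : a * b + b * d = 0) : star b * a + d * star b = 0 := by
  have h := congrArg star hab
  rwa [star_add, star_mul, star_mul, ha, hd, star_zero, mul_neg, neg_mul, ← neg_add,
    neg_eq_zero] at h

end Quaternion

section QuaternionBlockMatrix

open Quaternion

variable {R : Type*} [CommRing R] {a b d : ℍ[R]}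

lemma conjTranspose_mul_diag_mul_fin_two_of_star_eq_neg (ha : star a = -a) (hd : star d = -d)
    (hnorm : normSq a = normSq d) (hab : a * b + b * d = 0) :
    (!![a, b; star b, d])ᴴ * !![1, 0; 0, -1] * !![a, b; star b, d] =
      (normSq a - normSq b) • !![1, 0; 0, -1] := by
  rw [Matrix.conjTranspose_fin_two, Matrix.mul_fin_two, Matrix.mul_fin_two, star_star, ha, hd]
  simp only [mul_one, mul_zero, add_zero, zero_add, mul_neg, neg_mul, neg_neg, ← neg_add, hab,
    star_mul_add_mul_star_eq_zero ha hd hab, neg_zero, mul_self_of_star_eq_neg ha,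
    hnorm ▸ mul_self_of_star_eq_neg hd, self_mul_star, star_mul_self]
  refine Matrix.ext fun i j => ?_
  fin_cases i <;> fin_cases j <;> simp [Algebra.smul_def] <;> abel

lemma sq_fin_two_of_star_eq_neg (ha : star a = -a) (hd : star d = -d)
    (hnorm : normSq a = normSq d) (hab : a * b + b * d = 0) :
    !![a, b; star b, d] ^ 2 = -(normSq a - normSq b) • (1 : Matrix (Fin 2) (Fin 2) ℍ[R]) := by
  rw [sq, Matrix.mul_fin_two, Matrix.one_fin_two]
  simp only [hab, star_mul_add_mul_star_eq_zero ha hd hab, mul_self_of_star_eq_neg ha,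
    hnorm ▸ mul_self_of_star_eq_neg hd, self_mul_star, star_mul_self]
  refine Matrix.ext fun i j => ?_
  fin_cases i <;> fin_cases j <;> simp [Algebra.smul_def] <;> abel

end QuaternionBlockMatrix

lemma tau_sq : tau ^ 2 = tau + 1 := by
  have h5 : √5 ^ 2 = 5 := Real.sq_sqrt (by norm_num)
  unfold tau
  linear_combination h5 / 4

lemma one_lt_tau : 1 < tau := by
  have : 1 < √5 := Real.lt_sqrt (by norm_num) |>.mpr (by norm_num)
  unfold tau
  linarith

lemma kap_sq : kap ^ 2 = 1 + 3 * tau :=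
  Real.sq_sqrt (by linarith [one_lt_tau])

def sigmaA : ℍ[ℝ] := ⟨0, (1 + tau) * kap, kap, -(tau * kap)⟩

def sigmaB : ℍ[ℝ] := ⟨tau, -(1 + 3 * tau), 0, 1 + 2 * tau⟩

def sigmaD : ℍ[ℝ] := ⟨0, -((1 + tau) * kap), kap, tau * kap⟩

lemma star_sigmaB : star sigmaB = ⟨tau, 1 + 3 * tau, 0, -(1 + 2 * tau)⟩ := by
  ext <;> simp only [Quaternion.re_star, Quaternion.imI_star, Quaternion.imJ_star,
    Quaternion.imK_star] <;> simp [sigmaB]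

lemma sigmaHat_eq : sigmaHat = (√(tau - 1) / 2) • !![sigmaA, sigmaB; star sigmaB, sigmaD] := by
  rw [star_sigmaB]
  rfl

lemma normSq_sigmaD : normSq sigmaD = normSq sigmaA := by
  rw [normSq_def', normSq_def', sigmaA, sigmaD]
  ring

lemma sigmaA_mul_sigmaB_add_sigmaB_mul_sigmaD : sigmaA * sigmaB + sigmaB * sigmaD = 0 := by
  ext <;> simp only [Quaternion.re_add, Quaternion.imI_add, Quaternion.imJ_add,
    Quaternion.imK_add, Quaternion.re_mul, Quaternion.imI_mul, Quaternion.imJ_mul,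
    Quaternion.imK_mul] <;> simp [sigmaA, sigmaB, sigmaD]
  · ring
  · ring
  · linear_combination (2 * kap) * tau_sq
  · ring

lemma star_sigmaA : star sigmaA = -sigmaA :=
  Quaternion.star_eq_neg.mpr rfl

lemma star_sigmaD : star sigmaD = -sigmaD :=
  Quaternion.star_eq_neg.mpr rfl

lemma normSq_sigmaA_sub_normSq_sigmaB : normSq sigmaA - normSq sigmaB = 4 * tau := by
  rw [normSq_def', normSq_def', sigmaA, sigmaB]
  linear_combination (2 * tau ^ 2 + 2 * tau + 2) * kap_sq + 6 * tau * tau_sq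

theorem stmt9 : sigmaHat ∈ SU11H ∧ sigmaHat ^ 2 = -1 ∧ orderOf sigmaHat = 4 := by
  have hscale : (√(tau - 1) / 2) ^ 2 * (normSq sigmaA - normSq sigmaB) = 1 := by
    rw [normSq_sigmaA_sub_normSq_sigmaB, div_pow, Real.sq_sqrt (by linarith [one_lt_tau])]
    linear_combination tau_sq
  have hsq : sigmaHat ^ 2 = -1 := by
    rw [sigmaHat_eq, smul_pow, sq_fin_two_of_star_eq_neg star_sigmaA star_sigmaD
      normSq_sigmaD.symm sigmaA_mul_sigmaB_add_sigmaB_mul_sigmaD, smul_smul, mul_neg, hscale,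
      neg_smul, one_smul]
  have hJ : sigmaHatᴴ * Jq * sigmaHat = Jq := by
    rw [sigmaHat_eq, Matrix.conjTranspose_smul_quaternion, smul_mul_assoc, smul_mul_assoc,
      mul_smul_comm, smul_smul, ← sq, Jq, conjTranspose_mul_diag_mul_fin_two_of_star_eq_neg
      star_sigmaA star_sigmaD normSq_sigmaD.symm sigmaA_mul_sigmaB_add_sigmaB_mul_sigmaD,
      smul_smul, hscale, one_smul]
  have hne : (-1 : Matrix (Fin 2) (Fin 2) ℍ[ℝ]) ≠ 1 := fun h => by
    have h00 := congrArg (fun M => (M 0 0).re) h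
    norm_num at h00
  exact ⟨hJ, hsq, orderOf_eq_four_of_sq_eq_neg_one hsq hne⟩
end
end

section
/- Let Ĝ be a group and let z be a central element of Ĝ with z ≠ 1 and z² = 1. Suppose f ∈ Ĝ has finite order and there exists ψ ∈ Ĝ with ψ·f·ψ⁻¹ = z·f. Then the image of f in the quotient group Ĝ/⟨z⟩ has even order. -/
theorem conj_pow_eq_mul_pow_of_conj_eq_mul {G : Type*} [Group G] {z f ψ : G}
    (hz : z ∈ Subgroup.center G) (h : ψ * f * ψ⁻¹ = z * f) (n : ℕ) :
    ψ * f ^ n * ψ⁻¹ = z ^ n * f ^ n := by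
  rw [← conj_pow, h, (Commute.symm (Subgroup.mem_center_iff.mp hz f)).mul_pow]

/-- Since `f ^ n` is central for `n` the order of `f` modulo a central subgroup, conjugating it by
`ψ` changes nothing, while it also multiplies it by `z ^ n`. -/
theorem orderOf_dvd_orderOf_mk_of_conj_eq_mul {G : Type*} [Group G] {H : Subgroup G} [H.Normal]
    (hH : H ≤ Subgroup.center G) {z f ψ : G} (hz : z ∈ Subgroup.center G)
    (h : ψ * f * ψ⁻¹ = z * f) : orderOf z ∣ orderOf (f : G ⧸ H) := by
  set n := orderOf (f : G ⧸ H)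
  have hfn : f ^ n ∈ Subgroup.center G :=
    hH <| (QuotientGroup.eq_one_iff _).mp <| by rw [QuotientGroup.mk_pow, pow_orderOf_eq_one]
  have hfix : ψ * f ^ n * ψ⁻¹ = f ^ n := by
    rw [Subgroup.mem_center_iff.mp hfn ψ, mul_inv_cancel_right]
  apply orderOf_dvd_of_pow_eq_one
  exact mul_eq_right.mp ((conj_pow_eq_mul_pow_of_conj_eq_mul hz h n).symm.trans hfix)

theorem stmt11_general {G : Type*} [Group G] (z : G) (hz_center : z ∈ Subgroup.center G)
    (hz_ne : z ≠ 1) (hz_sq : z ^ 2 = 1) (f : G)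
    (ψ : G) (hψ : ψ * f * ψ⁻¹ = z * f)
    [(Subgroup.zpowers z).Normal] :
    Even (orderOf ((f : G ⧸ Subgroup.zpowers z))) := by
  have hz_two : orderOf z = 2 := orderOf_eq_prime hz_sq hz_ne
  rw [even_iff_two_dvd, ← hz_two]
  exact orderOf_dvd_orderOf_mk_of_conj_eq_mul (Subgroup.zpowers_le.mpr hz_center) hz_center hψ

theorem stmt11 {G : Type*} [Group G] (z : G) (hz_center : z ∈ Subgroup.center G)
    (hz_ne : z ≠ 1) (hz_sq : z ^ 2 = 1) (f : G) (hf : IsOfFinOrder f)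
    (ψ : G) (hψ : ψ * f * ψ⁻¹ = z * f)
    [(Subgroup.zpowers z).Normal] :
    Even (orderOf ((f : G ⧸ Subgroup.zpowers z))) :=
  stmt11_general z hz_center hz_ne hz_sq f ψ hψ
end
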